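/- For all m×m complex matrices S and T and every positive integer n, B_n(S·T) = B_n(S)·B_n(T), and B_n(I_m) is the identity matrix on ℂ^{T(m,n)}; in particular, B_n restricts to a group homomorphism from the unitary group U(m) to the unitary group of ℂ^{T(m,n)}. -/
import Mathlib


namespace BSF

variable {α : Type*} [Fintype α] [DecidableEq α]

/-- The canonical list in which each index `i` is repeated `ν i` times. -/
noncomputable def repList (ν : α → ℕ) : List α :=
  Finset.univ.toList.flatMap fun i => List.replicate (ν i) i

set_option linter.unusedSectionVars false in
lemma repList_length (ν : α → ℕ) : (repList ν).length = ∑ i, ν i := by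
  simp [repList, List.length_flatMap]

/-- The index set `T(m,n)`: occupation-number tuples with total `n`. -/
def BosonIdx (α : Type*) [Fintype α] (n : ℕ) := {ν : α → ℕ // ∑ i, ν i = n}

instance {n : ℕ} : DecidableEq (BosonIdx α n) :=
  inferInstanceAs (DecidableEq {ν : α → ℕ // ∑ i, ν i = n})

noncomputable instance {n : ℕ} : Fintype (BosonIdx α n) :=
  Fintype.ofInjective
    (fun ν : BosonIdx α n => fun i : α =>
      (⟨ν.1 i, by
        have h := Finset.single_le_sum (f := ν.1) (fun j _ => Nat.zero_le _) (Finset.mem_univ i)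
        rw [ν.2] at h
        omega⟩ : Fin (n + 1)))
    (fun a b hab => Subtype.ext (funext fun i => congrArg Fin.val (congrFun hab i)))

/-- The permanent of a square complex matrix. -/
noncomputable def permanent {n : ℕ} (M : Matrix (Fin n) (Fin n) ℂ) : ℂ :=
  ∑ σ : Equiv.Perm (Fin n), ∏ i, M (σ i) i

/-- The canonical repetition function associated with an occupation tuple. -/
noncomputable def repFun {n : ℕ} (ν : BosonIdx α n) : Fin n → α :=
  fun k => (repList ν.1).get (Fin.cast ((repList_length ν.1).trans ν.2).symm k)

/-- The `n`-boson representation of a matrix `S`. -/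
noncomputable def bosonRep (n : ℕ) (S : Matrix α α ℂ) :
    Matrix (BosonIdx α n) (BosonIdx α n) ℂ :=
  Matrix.of fun ν ν' =>
    permanent (Matrix.of fun k l => S (repFun ν k) (repFun ν' l)) /
      (Real.sqrt ((∏ i, (ν.1 i).factorial * (ν'.1 i).factorial : ℕ) : ℝ) : ℂ)

/-- Relabeling an occupation tuple by (precomposition with) a permutation of the modes. -/
def permIdx {n : ℕ} (σ : Equiv.Perm α) (ν : BosonIdx α n) : BosonIdx α n :=
  ⟨ν.1 ∘ σ, show ∑ i, ν.1 (σ i) = n from (Equiv.sum_comp σ ν.1).trans ν.2⟩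

section Aux

open Finset

set_option linter.unusedSectionVars false

variable {n : ℕ}

/-- Occupation numbers of a function. -/
def occ (g : Fin n → α) : α → ℕ := fun j => (univ.filter fun k => g k = j).card

lemma sum_occ (g : Fin n → α) : ∑ j, occ g j = n := by
  have := Finset.card_eq_sum_card_fiberwise
    (s := (univ : Finset (Fin n))) (t := univ) (f := g) (fun x _ => mem_univ (g x))
  simpa [occ] using this.symm

/-- Occupation as an element of `BosonIdx`. -/
def occB (g : Fin n → α) : BosonIdx α n := ⟨occ g, sum_occ g⟩

lemma occ_eq_count (g : Fin n → α) (j : α) : occ g j = (List.ofFn g).count j := by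
  rw [occ, ← Multiset.coe_count, ← Fin.univ_val_map, Multiset.count_map]
  simp [Finset.card, Finset.filter_val, eq_comm]

lemma count_repList (ν : α → ℕ) (j : α) : (repList ν).count j = ν j := by
  rw [repList, List.count_flatMap]
  simp only [Function.comp_def, List.count_replicate]
  have h : ∀ f : α → ℕ, ((univ : Finset α).toList.map f).sum = ∑ x, f x := by
    intro f
    rw [Finset.sum_eq_multiset_sum, ← Finset.coe_toList univ, Multiset.map_coe, Multiset.sum_coe]
  rw [h]
  simp only [beq_iff_eq]
  rw [Finset.sum_ite_eq' univ j ν]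
  simp

lemma ofFn_get_cast {l : List α} (h : l.length = n) :
    List.ofFn (fun k : Fin n => l.get (Fin.cast h.symm k)) = l := by
  subst h
  simpa using List.ofFn_get l

lemma ofFn_repFun (ν : BosonIdx α n) : List.ofFn (repFun ν) = repList ν.1 :=
  ofFn_get_cast ((repList_length ν.1).trans ν.2)

lemma occ_repFun (ν : BosonIdx α n) : occ (repFun ν) = ν.1 := by
  funext j
  rw [occ_eq_count, ofFn_repFun, count_repList]

/-- The permutations intertwining two functions correspond to families of fiber bijections. -/
def compPermEquiv (g h : Fin n → α) :
    {τ : Equiv.Perm (Fin n) // h ∘ τ = g} ≃ ∀ j : α, {l // g l = j} ≃ {l // h l = j} where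
  toFun τ j := Equiv.subtypeEquiv τ.1 fun l => by
    rw [← congrFun τ.2 l]; exact Iff.rfl
  invFun e :=
    ⟨(Equiv.sigmaFiberEquiv g).symm.trans ((Equiv.sigmaCongrRight e).trans (Equiv.sigmaFiberEquiv h)),
      by funext l; exact ((e (g l)) ⟨l, rfl⟩).2⟩
  left_inv τ := by
    apply Subtype.ext; apply Equiv.ext; intro l; rfl
  right_inv e := by
    funext j
    apply Equiv.ext
    rintro ⟨l, hl⟩
    apply Subtype.ext
    subst hl
    rfl

lemma card_fiber (g : Fin n → α) (j : α) : Fintype.card {l // g l = j} = occ g j := by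
  rw [occ]; exact Fintype.card_subtype _

lemma occ_comp_perm (h : Fin n → α) (τ : Equiv.Perm (Fin n)) : occ (h ∘ τ) = occ h := by
  funext j
  exact Finset.card_equiv τ (by simp)

lemma card_compPerm (g h : Fin n → α) :
    Fintype.card {τ : Equiv.Perm (Fin n) // h ∘ τ = g}
      = if occ g = occ h then ∏ j, (occ g j).factorial else 0 := by
  split_ifs with hocc
  · rw [Fintype.card_congr (compPermEquiv g h), Fintype.card_pi]
    refine Finset.prod_congr rfl fun j _ => ?_
    have e : {l // g l = j} ≃ {l // h l = j} :=
      Fintype.equivOfCardEq (by rw [card_fiber, card_fiber, hocc])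
    rw [Fintype.card_equiv e, card_fiber]
  · rw [Fintype.card_eq_zero_iff]
    exact ⟨fun τ => hocc (by rw [← τ.2]; exact occ_comp_perm h τ.1)⟩

lemma sum_comp_perm (h : Fin n → α) (F : (Fin n → α) → ℂ) :
    ∑ τ : Equiv.Perm (Fin n), F (h ∘ τ)
      = ((∏ j, (occ h j).factorial : ℕ) : ℂ) * ∑ g ∈ univ.filter fun g => occ g = occ h, F g := by
  have step1 : ∑ τ : Equiv.Perm (Fin n), F (h ∘ τ)
      = ∑ g : Fin n → α, ∑ τ ∈ univ.filter fun τ : Equiv.Perm (Fin n) => h ∘ τ = g, F (h ∘ τ) :=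
    (Finset.sum_fiberwise_of_maps_to (fun τ _ => mem_univ _) _).symm
  rw [step1]
  have step2 : ∀ g : Fin n → α,
      (∑ τ ∈ univ.filter fun τ : Equiv.Perm (Fin n) => h ∘ τ = g, F (h ∘ τ))
        = ((if occ g = occ h then ∏ j, (occ h j).factorial else 0 : ℕ) : ℂ) * F g := by
    intro g
    rw [Finset.sum_congr rfl fun τ hτ => by rw [(Finset.mem_filter.1 hτ).2]]
    rw [Finset.sum_const, nsmul_eq_mul]
    congr 1
    have : (univ.filter fun τ : Equiv.Perm (Fin n) => h ∘ τ = g).card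
        = Fintype.card {τ : Equiv.Perm (Fin n) // h ∘ τ = g} := (Fintype.card_subtype _).symm
    rw [this, card_compPerm]
    split_ifs with hocc
    · rw [hocc]
    · rfl
  simp_rw [step2]
  rw [Finset.mul_sum, Finset.sum_filter]
  refine Finset.sum_congr rfl fun g _ => ?_
  split_ifs with hocc <;> simp

end Aux

section Main

open Finset

set_option linter.unusedSectionVars false

variable {n : ℕ}

lemma sum_perm_prod_comp (f : Fin n → Fin n → ℂ) (τ : Equiv.Perm (Fin n)) :
    ∑ σ : Equiv.Perm (Fin n), ∏ l, f (σ l) (τ l) = ∑ σ : Equiv.Perm (Fin n), ∏ l, f (σ l) l := by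
  have h1 : ∀ σ : Equiv.Perm (Fin n), ∏ l, f (σ l) (τ l) = ∏ l, f ((σ * τ⁻¹) l) l := by
    intro σ
    rw [← Equiv.prod_comp τ (fun l => f ((σ * τ⁻¹) l) l)]
    refine Finset.prod_congr rfl fun l _ => ?_
    simp [Equiv.Perm.mul_apply]
  simp_rw [h1]
  exact Fintype.sum_bijective (· * τ⁻¹) (Group.mulRight_bijective _) _ _ (fun σ => rfl)

lemma permanent_mul (S T : Matrix α α ℂ) (ν ν' : BosonIdx α n) :
    permanent (Matrix.of fun k l => (S * T) (repFun ν k) (repFun ν' l))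
      = ∑ μ : BosonIdx α n,
          permanent (Matrix.of fun k l => S (repFun ν k) (repFun μ l)) *
            permanent (Matrix.of fun k l => T (repFun μ k) (repFun ν' l)) /
            ((∏ j, (μ.1 j).factorial : ℕ) : ℂ) := by
  set r := repFun ν with hr
  set c := repFun ν' with hc
  have expand : permanent (Matrix.of fun k l => (S * T) (r k) (c l))
      = ∑ g : Fin n → α, ∑ σ : Equiv.Perm (Fin n), ∏ l, S (r (σ l)) (g l) * T (g l) (c l) := by
    simp only [permanent]
    rw [Finset.sum_comm]
    refine Finset.sum_congr rfl fun σ _ => ?_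
    simp only [Matrix.of_apply, Matrix.mul_apply]
    exact Fintype.prod_sum (fun l j => S (r (σ l)) j * T j (c l))
  rw [expand]
  have fiber : (∑ g : Fin n → α, ∑ σ : Equiv.Perm (Fin n), ∏ l, S (r (σ l)) (g l) * T (g l) (c l))
      = ∑ μ : BosonIdx α n, ∑ g ∈ univ.filter fun g : Fin n → α => occB g = μ,
          ∑ σ : Equiv.Perm (Fin n), ∏ l, S (r (σ l)) (g l) * T (g l) (c l) :=
    (Finset.sum_fiberwise_of_maps_to (fun g _ => mem_univ (occB g)) _).symm
  rw [fiber]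
  refine Finset.sum_congr rfl fun μ _ => ?_
  set h := repFun μ with hh
  have hfilter : (univ.filter fun g : Fin n → α => occB g = μ)
      = univ.filter fun g : Fin n → α => occ g = occ h := by
    refine Finset.filter_congr fun g _ => ?_
    rw [hh, occ_repFun]
    exact ⟨fun e => congrArg Subtype.val e, fun e => Subtype.ext e⟩
  rw [hfilter]
  have key := sum_comp_perm h (fun g => ∑ σ : Equiv.Perm (Fin n), ∏ l, S (r (σ l)) (g l) * T (g l) (c l))
  have hQ : ((∏ j, (occ h j).factorial : ℕ) : ℂ) ≠ 0 := by
    exact_mod_cast Nat.cast_ne_zero.2 (Finset.prod_ne_zero_iff.2 fun j _ => (Nat.factorial_pos _).ne')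
  have hperm : ∀ τ : Equiv.Perm (Fin n),
      (∑ σ : Equiv.Perm (Fin n), ∏ l, S (r (σ l)) (h (τ l)) * T (h (τ l)) (c l))
        = permanent (Matrix.of fun k l => S (r k) (h l)) * ∏ l, T (h (τ l)) (c l) := by
    intro τ
    have : ∀ σ : Equiv.Perm (Fin n), ∏ l, S (r (σ l)) (h (τ l)) * T (h (τ l)) (c l)
        = (∏ l, S (r (σ l)) (h (τ l))) * ∏ l, T (h (τ l)) (c l) := fun σ =>
      Finset.prod_mul_distrib
    simp_rw [this, ← Finset.sum_mul]
    congr 1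
    simp only [permanent]
    simp only [Matrix.of_apply]
    exact sum_perm_prod_comp (fun x y => S (r x) (h y)) τ
  have hsum : (∑ τ : Equiv.Perm (Fin n),
        ∑ σ : Equiv.Perm (Fin n), ∏ l, S (r (σ l)) ((h ∘ τ) l) * T ((h ∘ τ) l) (c l))
      = permanent (Matrix.of fun k l => S (r k) (h l)) *
          permanent (Matrix.of fun k l => T (h k) (c l)) := by
    simp only [Function.comp_apply]
    simp_rw [hperm]
    rw [← Finset.mul_sum]
    congr 1
  rw [hsum] at key
  have hQμ : (∏ j, (occ h j).factorial : ℕ) = ∏ j, (μ.1 j).factorial := by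
    rw [hh, occ_repFun]
  rw [hQμ] at key hQ
  rw [eq_div_iff hQ, mul_comm]
  exact key.symm
end Main

section Main2

open Finset Matrix

set_option linter.unusedSectionVars false

variable {n : ℕ}

lemma bosonRep_mul (S T : Matrix α α ℂ) :
    bosonRep n (S * T) = bosonRep n S * bosonRep n T := by
  ext ν ν'
  rw [Matrix.mul_apply]
  simp only [bosonRep, Matrix.of_apply]
  rw [permanent_mul, Finset.sum_div]
  refine Finset.sum_congr rfl fun μ _ => ?_
  set P : ℕ := ∏ i, (ν.1 i).factorial with hP
  set Q : ℕ := ∏ i, (μ.1 i).factorial with hQ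
  set R : ℕ := ∏ i, (ν'.1 i).factorial with hR
  have hPQ : (∏ i, (ν.1 i).factorial * (μ.1 i).factorial : ℕ) = P * Q := Finset.prod_mul_distrib
  have hQR : (∏ i, (μ.1 i).factorial * (ν'.1 i).factorial : ℕ) = Q * R := Finset.prod_mul_distrib
  have hPR : (∏ i, (ν.1 i).factorial * (ν'.1 i).factorial : ℕ) = P * R := Finset.prod_mul_distrib
  rw [hPQ, hQR, hPR, div_mul_div_comm, div_div]
  congr 1
  have hreal : (Q : ℝ) * Real.sqrt ((P * R : ℕ) : ℝ)
      = Real.sqrt ((P * Q : ℕ) : ℝ) * Real.sqrt ((Q * R : ℕ) : ℝ) := by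
    rw [Nat.cast_mul, Nat.cast_mul, Nat.cast_mul,
      Real.sqrt_mul (by positivity), Real.sqrt_mul (by positivity),
      Real.sqrt_mul (by positivity)]
    have hq : Real.sqrt (Q : ℝ) * Real.sqrt (Q : ℝ) = (Q : ℝ) :=
      Real.mul_self_sqrt (by positivity)
    linear_combination (-(Real.sqrt (P : ℝ) * Real.sqrt (R : ℝ))) * hq
  calc ((Q : ℕ) : ℂ) * ((Real.sqrt ((P * R : ℕ) : ℝ) : ℝ) : ℂ)
      = (((Q : ℝ) * Real.sqrt ((P * R : ℕ) : ℝ) : ℝ) : ℂ) := by push_cast; ring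
    _ = (((Real.sqrt ((P * Q : ℕ) : ℝ)) * Real.sqrt ((Q * R : ℕ) : ℝ) : ℝ) : ℂ) := by
        rw [hreal]
    _ = _ := by push_cast; ring

lemma bosonRep_one : bosonRep n (1 : Matrix α α ℂ) = 1 := by
  ext ν ν'
  simp only [bosonRep, Matrix.of_apply]
  have hper : permanent (Matrix.of fun k l => (1 : Matrix α α ℂ) (repFun ν k) (repFun ν' l))
      = (Fintype.card {σ : Equiv.Perm (Fin n) // repFun ν ∘ σ = repFun ν'} : ℂ) := by
    simp only [permanent, Matrix.of_apply, Matrix.one_apply]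
    have h2 : ∀ σ : Equiv.Perm (Fin n),
        (∏ l, if repFun ν (σ l) = repFun ν' l then (1 : ℂ) else 0)
          = if repFun ν ∘ σ = repFun ν' then 1 else 0 := by
      intro σ
      by_cases hc : repFun ν ∘ σ = repFun ν'
      · rw [if_pos hc]
        exact Finset.prod_eq_one fun l _ => if_pos (congrFun hc l)
      · rw [if_neg hc]
        obtain ⟨l, hl⟩ : ∃ l, repFun ν (σ l) ≠ repFun ν' l := by
          by_contra hall; push_neg at hall; exact hc (funext hall)
        exact Finset.prod_eq_zero (mem_univ l) (if_neg hl)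
    simp_rw [h2]
    rw [Finset.sum_boole]
    have := Fintype.card_subtype (fun σ : Equiv.Perm (Fin n) => repFun ν ∘ σ = repFun ν')
    rw [this]
  rw [hper, card_compPerm, occ_repFun, occ_repFun]
  by_cases hνν : ν = ν'
  · subst hνν
    rw [if_pos rfl, Matrix.one_apply_eq]
    have hPP : (∏ i, (ν.1 i).factorial * (ν.1 i).factorial : ℕ)
        = (∏ i, (ν.1 i).factorial) * (∏ i, (ν.1 i).factorial) := Finset.prod_mul_distrib
    rw [hPP]
    have hs : Real.sqrt ((((∏ i, (ν.1 i).factorial) * (∏ i, (ν.1 i).factorial) : ℕ)) : ℝ)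
        = ((∏ i, (ν.1 i).factorial : ℕ) : ℝ) := by
      push_cast
      exact Real.sqrt_mul_self (by positivity)
    rw [hs, Complex.ofReal_natCast]
    exact div_self (Nat.cast_ne_zero.2 (Finset.prod_ne_zero_iff.2
      fun j _ => (Nat.factorial_pos _).ne'))
  · have hne : ν'.1 ≠ ν.1 := fun e => hνν (Subtype.ext e.symm)
    rw [if_neg hne, Matrix.one_apply_ne hνν]
    simp

lemma permanent_transpose (M : Matrix (Fin n) (Fin n) ℂ) : permanent Mᵀ = permanent M := by
  simp only [permanent]
  have h1 : ∀ σ : Equiv.Perm (Fin n), ∏ l, Mᵀ (σ l) l = ∏ l, M (σ⁻¹ l) l := by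
    intro σ
    rw [← Equiv.prod_comp σ (fun l => M (σ⁻¹ l) l)]
    refine Finset.prod_congr rfl fun l _ => ?_
    simp
  simp_rw [h1]
  exact Fintype.sum_bijective (·⁻¹) inv_involutive.bijective _ _ (fun σ => rfl)

lemma bosonRep_conjTranspose (S : Matrix α α ℂ) :
    (bosonRep n S)ᴴ = bosonRep n Sᴴ := by
  ext ν ν'
  simp only [Matrix.conjTranspose_apply, bosonRep, Matrix.of_apply]
  rw [star_div₀]
  congr 1
  · have h1 : star (permanent (Matrix.of fun k l => S (repFun ν' k) (repFun ν l)))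
        = permanent (Matrix.of fun k l => star (S (repFun ν' k) (repFun ν l))) := by
      simp only [permanent, Matrix.of_apply, star_sum, star_prod]
    rw [h1]
    have h3 : (Matrix.of fun k l => star (S (repFun ν' l) (repFun ν k)))
        = (Matrix.of fun k l => star (S (repFun ν' k) (repFun ν l)))ᵀ := by
      ext k l
      simp
    rw [h3, permanent_transpose]
  · have hsw : (∏ i, (ν'.1 i).factorial * (ν.1 i).factorial : ℕ)
        = (∏ i, (ν.1 i).factorial * (ν'.1 i).factorial : ℕ) :=
      Finset.prod_congr rfl fun i _ => Nat.mul_comm _ _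
    rw [hsw, Complex.star_def, Complex.conj_ofReal]

end Main2

/-- `B_n` is multiplicative, sends the identity to the identity, and hence
restricts to a group homomorphism from the unitary group `U(m)` to the unitary group of
`ℂ^{T(m,n)}`. -/
theorem bosonRep_monoidHom {m n : ℕ} (hn : 0 < n) :
    (∀ S T : Matrix (Fin m) (Fin m) ℂ,
      bosonRep n (S * T) = bosonRep n S * bosonRep n T) ∧
    bosonRep n (1 : Matrix (Fin m) (Fin m) ℂ) = (1 : Matrix (BosonIdx (Fin m) n) (BosonIdx (Fin m) n) ℂ) ∧
    (∀ S : Matrix (Fin m) (Fin m) ℂ, S ∈ Matrix.unitaryGroup (Fin m) ℂ →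
      bosonRep n S ∈ Matrix.unitaryGroup (BosonIdx (Fin m) n) ℂ) ∧
    (∃ f : Matrix.unitaryGroup (Fin m) ℂ →* Matrix.unitaryGroup (BosonIdx (Fin m) n) ℂ,
      ∀ S : Matrix.unitaryGroup (Fin m) ℂ,
        ((f S : Matrix (BosonIdx (Fin m) n) (BosonIdx (Fin m) n) ℂ)) = bosonRep n (S : Matrix (Fin m) (Fin m) ℂ)) := by
  clear hn
  have hmem : ∀ S : Matrix (Fin m) (Fin m) ℂ, S ∈ Matrix.unitaryGroup (Fin m) ℂ →
      bosonRep n S ∈ Matrix.unitaryGroup (BosonIdx (Fin m) n) ℂ := by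
    intro S hS
    rw [Matrix.mem_unitaryGroup_iff]
    have h1 : S * star S = 1 := Matrix.mem_unitaryGroup_iff.mp hS
    rw [Matrix.star_eq_conjTranspose, bosonRep_conjTranspose, ← bosonRep_mul,
      ← Matrix.star_eq_conjTranspose, h1, bosonRep_one]
  refine ⟨fun S T => bosonRep_mul S T, bosonRep_one, hmem, ?_⟩
  refine ⟨MonoidHom.mk'
    (fun S => ⟨bosonRep n (S : Matrix (Fin m) (Fin m) ℂ), hmem _ S.2⟩) ?_, fun S => rfl⟩
  intro a b
  apply Subtype.ext
  have hc : ((a * b : Matrix.unitaryGroup (Fin m) ℂ) : Matrix (Fin m) (Fin m) ℂ)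
      = (a : Matrix (Fin m) (Fin m) ℂ) * (b : Matrix (Fin m) (Fin m) ℂ) := rfl
  show bosonRep n ((a * b : Matrix.unitaryGroup (Fin m) ℂ) : Matrix (Fin m) (Fin m) ℂ) = _
  rw [hc, bosonRep_mul]
  rfl

end BSF
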